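/- Let r be a nonnegative integer and T ∈ B(X) with sup over all integers n ≥ 1 and all λ ∈ ℂ with |λ| = 1 of n^{−r} ‖M_n(λT)‖ finite. Define the seminorm γ(x) = limsup_{n→∞} ‖M_n^{(r+1)}(T)(T−I)^{r+1} x‖ on X. If there exist a complex Banach space Y and an operator Q ∈ B(X, Y) with closed range such that ‖Q x‖ = γ(x) for all x ∈ X, then ‖T^n x‖ / n^{r+1} → 0 as n → ∞ for every x ∈ X. -/

import Mathlib

/-!
The Cesàro bound gives `‖T ^ n‖ = O(n ^ (r + 1))`, and the identity
`M_n^{(r+1)}(T) (T - I)^{r+1} = C(n+r+1, r+1)⁻¹ (T^{n+r+1} - ∑_{i ≤ r} C(n+r+1, i) (T - I)^i)`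
then shows `γ x = limsup ‖T ^ n x‖ / C(n, r+1)`. Consequently `γ (T x) = γ x`, and
`γ (M_d(λT) x) = O(‖x‖ / (d + 1))` because `T ^ n M_d(λT)` averages `d + 1` consecutive powers
of `λT`. Through `Q`, `T` thus induces an isometry `U` of the Banach space `range Q`, and by the
open mapping theorem `‖M_d(λU)‖ → 0` for every unimodular `λ`. But an isometry of a nonzero space
has a unimodular spectral value `ν`, and `1` lies in the spectrum of every `M_d(ν⁻¹U)`. Hence
`range Q = 0`, so `γ = 0`, i.e. `‖T ^ n x‖ = o(C(n, r+1)) = o(n ^ (r + 1))`.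
-/

open Filter Topology

/-- The Cesàro mean of order p of an operator S:
M_n^{(p)}(S) = (p/((n+1)⋯(n+p))) Σ_{j=0}^n ((n−j+p−1)!/(n−j)!) S^j. -/
noncomputable def cesaroMean {X : Type*} [NormedAddCommGroup X] [NormedSpace ℂ X]
    (p : ℕ) (S : X →L[ℂ] X) (n : ℕ) : X →L[ℂ] X :=
  ((p : ℂ) / ∏ i ∈ Finset.range p, ((n : ℂ) + 1 + i)) •
    ∑ j ∈ Finset.range (n + 1),
      (((n - j + p - 1).factorial : ℂ) / ((n - j).factorial : ℂ)) • S ^ j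

open Finset Asymptotics

section Limsup

variable {ι : Type*} {f : Filter ι} [f.NeBot] {u v c : ι → ℝ}

lemma limsup_eq_of_tendsto_sub (hv₀ : ∀ i, 0 ≤ v i) (hv : IsBoundedUnder (· ≤ ·) f v)
    (h : Tendsto (u - v) f (𝓝 0)) : limsup u f = limsup v f := by
  have hv' : IsBoundedUnder (· ≥ ·) f v := isBoundedUnder_of_eventually_ge (.of_forall hv₀)
  have hu : u = v + (u - v) := by abel
  apply le_antisymm
  · calc limsup u f = limsup (v + (u - v)) f := by rw [← hu]
      _ ≤ limsup v f + limsup (u - v) f :=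
        limsup_add_le hv' hv h.isBoundedUnder_ge.isCoboundedUnder_le h.isBoundedUnder_le
      _ = limsup v f := by rw [h.limsup_eq, add_zero]
  · calc limsup v f = limsup v f + liminf (u - v) f := by rw [h.liminf_eq, add_zero]
      _ ≤ limsup (v + (u - v)) f :=
        le_limsup_add hv hv'.isCoboundedUnder_le h.isBoundedUnder_le h.isBoundedUnder_ge
      _ = limsup u f := by rw [← hu]

lemma limsup_mul_eq_of_tendsto_one (hv₀ : ∀ i, 0 ≤ v i) (hv : IsBoundedUnder (· ≤ ·) f v)
    (hc : Tendsto c f (𝓝 1)) : limsup (c * v) f = limsup v f := by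
  refine limsup_eq_of_tendsto_sub hv₀ hv ?_
  have hcv : c * v - v = (c - 1) * v := by ring
  rw [hcv]
  refine (tendsto_sub_nhds_zero_iff.mpr hc).zero_mul_isBoundedUnder_le ?_
  simpa only [Function.comp_def, Real.norm_of_nonneg (hv₀ _)] using hv

end Limsup

section Choose

lemma tendsto_choose_div_choose_of_lt {i j : ℕ} (hij : i < j) :
    Tendsto (fun n : ℕ => (n.choose i : ℝ) / n.choose j) atTop (𝓝 0) := by
  have hpow : (fun n : ℕ => (n : ℝ) ^ i) =o[atTop] (fun n : ℕ => (n : ℝ) ^ j) :=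
    (isLittleO_pow_pow_atTop_of_lt hij).comp_tendsto tendsto_natCast_atTop_atTop
  exact (((isTheta_choose i).trans_isLittleO hpow).trans_isTheta
    (isTheta_choose j).symm).tendsto_div_nhds_zero

lemma tendsto_succ_choose_div_choose (p : ℕ) :
    Tendsto (fun n : ℕ => ((n + 1).choose p : ℝ) / n.choose p) atTop (𝓝 1) := by
  cases p with
  | zero => simp
  | succ q =>
    have hpos : ∀ᶠ n : ℕ in atTop, (n.choose (q + 1) : ℝ) ≠ 0 :=
      eventually_atTop.mpr ⟨q + 1, fun n hn => mod_cast (Nat.choose_pos hn).ne'⟩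
    have hlim := (tendsto_choose_div_choose_of_lt q.lt_succ_self).add_const 1
    rw [zero_add] at hlim
    refine hlim.congr' (hpos.mono fun n hn => ?_)
    dsimp only
    rw [Nat.choose_succ_succ', Nat.cast_add, add_div, div_self hn]

lemma tendsto_add_pow_div_choose (k p : ℕ) :
    Tendsto (fun n : ℕ => ((n : ℝ) + k) ^ p / n.choose p) atTop (𝓝 (p.factorial : ℝ)) := by
  have hne : ∀ᶠ n : ℕ in atTop, (n : ℝ) + k ≠ 0 :=
    eventually_atTop.mpr ⟨1, fun n hn => by positivity⟩
  have hadd : (fun n : ℕ => (n : ℝ)) ~[atTop] (fun n : ℕ => (n : ℝ) + k) :=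
    (isEquivalent_iff_tendsto_one hne).mpr (tendsto_natCast_div_add_atTop (k : ℝ))
  have hequiv := (hadd.symm.pow p).div (isEquivalent_choose p)
  refine hequiv.tendsto_nhds_iff.mpr (tendsto_const_nhds.congr' ?_)
  filter_upwards [eventually_atTop.mpr ⟨1, fun n (hn : 1 ≤ n) => hn⟩] with n hn
  have : (n : ℝ) ^ p ≠ 0 := by positivity
  simp only [Pi.div_apply, Pi.pow_apply]
  field_simp

end Choose

section RingIdentity

variable {R : Type*} [Ring R] (s : R)

lemma mul_sum_choose_nsmul_sub_one_pow (N p : ℕ) :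
    s * ∑ i ∈ range (p + 1), N.choose i • (s - 1) ^ i =
      ∑ i ∈ range (p + 1), (N + 1).choose i • (s - 1) ^ i + N.choose p • (s - 1) ^ (p + 1) := by
  have hs : ∀ i, s * (s - 1) ^ i = (s - 1) ^ (i + 1) + (s - 1) ^ i := fun i => by
    rw [pow_succ', ← add_one_mul, sub_add_cancel]
  induction p with
  | zero => simp
  | succ p ih =>
    rw [sum_range_succ, mul_add, ih, mul_smul_comm, hs, sum_range_succ (n := p + 1),
      Nat.choose_succ_succ', add_smul, smul_add]
    abel

lemma sum_choose_nsmul_pow_mul_sub_one_pow (p n : ℕ) :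
    (∑ j ∈ range (n + 1), (n - j + p).choose p • s ^ j) * (s - 1) ^ (p + 1) =
      s ^ (n + p + 1) - ∑ i ∈ range (p + 1), (n + p + 1).choose i • (s - 1) ^ i := by
  induction n with
  | zero =>
    have h := (Commute.one_right (s - 1)).add_pow (p + 1)
    simp only [sub_add_cancel, one_pow, mul_one] at h
    simp [h, sum_range_succ, nsmul_eq_mul, Nat.cast_comm]
  | succ n ih =>
    have hH : ∑ j ∈ range (n + 1 + 1), (n + 1 - j + p).choose p • s ^ j =
        s * ∑ j ∈ range (n + 1), (n - j + p).choose p • s ^ j + (n + p + 1).choose p • 1 := by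
      rw [sum_range_succ', mul_sum]
      congr 1
      · refine sum_congr rfl fun j _ => ?_
        rw [Nat.add_sub_add_right, pow_succ', mul_smul_comm]
      · rw [pow_zero, Nat.sub_zero, Nat.add_right_comm]
    rw [hH, add_mul, mul_assoc, ih, mul_sub, ← pow_succ', mul_sum_choose_nsmul_sub_one_pow,
      smul_mul_assoc, one_mul, show n + 1 + p + 1 = n + p + 1 + 1 by ring]
    abel

end RingIdentity

section CesaroMean

variable {X : Type*} [NormedAddCommGroup X] [NormedSpace ℂ X]

lemma prod_range_add_one_add_eq (n p : ℕ) :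
    ∏ i ∈ range p, ((n : ℂ) + 1 + i) = (p.factorial * (n + p).choose p : ℕ) := by
  rw [← Nat.ascFactorial_eq_factorial_mul_choose, Nat.ascFactorial_eq_prod_range]
  push_cast
  rfl

lemma cesaroMean_succ (p : ℕ) (S : X →L[ℂ] X) (n : ℕ) :
    cesaroMean (p + 1) S n =
      ((n + p + 1).choose (p + 1) : ℂ)⁻¹ • ∑ j ∈ range (n + 1), (n - j + p).choose p • S ^ j := by
  rw [cesaroMean, prod_range_add_one_add_eq, smul_sum, smul_sum]
  refine sum_congr rfl fun j _ => ?_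
  rw [← Nat.cast_smul_eq_nsmul ℂ, smul_smul, smul_smul,
    show n - j + (p + 1) - 1 = n - j + p by omega, ← Nat.add_choose_mul_factorial_mul_factorial (n - j) p, Nat.factorial_succ, add_assoc]
  congr 1
  have : ((n - j).factorial : ℂ) ≠ 0 := mod_cast Nat.factorial_ne_zero _
  have : (p.factorial : ℂ) ≠ 0 := mod_cast Nat.factorial_ne_zero _
  have : ((n + (p + 1)).choose (p + 1) : ℂ) ≠ 0 := mod_cast (Nat.choose_pos (by omega)).ne'
  push_cast
  field_simp

lemma cesaroMean_one (S : X →L[ℂ] X) (n : ℕ) :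
    cesaroMean 1 S n = ((n : ℂ) + 1)⁻¹ • ∑ j ∈ range (n + 1), S ^ j := by
  simp [cesaroMean_succ 0]

lemma cesaroMean_succ_mul_sub_one_pow (p : ℕ) (S : X →L[ℂ] X) (n : ℕ) :
    cesaroMean (p + 1) S n * (S - 1) ^ (p + 1) =
      ((n + p + 1).choose (p + 1) : ℂ)⁻¹ •
        (S ^ (n + p + 1) - ∑ i ∈ range (p + 1), (n + p + 1).choose i • (S - 1) ^ i) := by
  rw [cesaroMean_succ, smul_mul_assoc, sum_choose_nsmul_pow_mul_sub_one_pow]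

lemma cesaroMean_comp_of_comp_eq {Z : Type*} [NormedAddCommGroup Z] [NormedSpace ℂ Z]
    {A : X →L[ℂ] X} {B : Z →L[ℂ] Z} {J : X →L[ℂ] Z} (h : B.comp J = J.comp A) (p n : ℕ) :
    (cesaroMean p B n).comp J = J.comp (cesaroMean p A n) := by
  have hpow : ∀ j : ℕ, (B ^ j).comp J = J.comp (A ^ j) := fun j => by
    induction j with
    | zero => rfl
    | succ j ih =>
      simp only [pow_succ, ContinuousLinearMap.mul_def, ContinuousLinearMap.comp_assoc, h]
      rw [← ContinuousLinearMap.comp_assoc, ih, ContinuousLinearMap.comp_assoc]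
  simp only [cesaroMean, ContinuousLinearMap.smul_comp, ContinuousLinearMap.comp_smul,
    ContinuousLinearMap.finsetSum_comp, ContinuousLinearMap.comp_finsetSum, hpow]

end CesaroMean

section PartialSums

lemma norm_sum_Ico_le_of_norm_sum_range_le {E : Type*} [SeminormedAddCommGroup E] {f : ℕ → E}
    {K : ℝ} {p : ℕ} (hf : ∀ m, ‖∑ k ∈ range m, f k‖ ≤ K * (m : ℝ) ^ p) {a b : ℕ} (hab : a ≤ b) :
    ‖∑ k ∈ Ico a b, f k‖ ≤ 2 * K * (b : ℝ) ^ p := by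
  have hK : 0 ≤ K := by simpa using (norm_nonneg _).trans (hf 1)
  have hab' : K * (a : ℝ) ^ p ≤ K * (b : ℝ) ^ p := by gcongr
  rw [sum_Ico_eq_sub _ hab]
  linarith [norm_sub_le (∑ k ∈ range b, f k) (∑ k ∈ range a, f k), hf a, hf b]

variable {X : Type*} [NormedAddCommGroup X] [NormedSpace ℂ X]

lemma norm_sum_range_pow_le_of_norm_cesaroMean_one_le {S : X →L[ℂ] X} {C : ℝ} {r : ℕ}
    (hS : ∀ n : ℕ, 1 ≤ n → ‖cesaroMean 1 S n‖ ≤ C * (n : ℝ) ^ r) (m : ℕ) :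
    ‖∑ k ∈ range m, S ^ k‖ ≤ (C + 1) * (m : ℝ) ^ (r + 1) := by
  have hC : 0 ≤ C := by simpa using (norm_nonneg _).trans (hS 1 le_rfl)
  rcases m with _ | n
  · simp
  rcases Nat.eq_zero_or_pos n with rfl | hn
  · have h1 : ‖(1 : X →L[ℂ] X)‖ ≤ 1 := ContinuousLinearMap.norm_id_le
    simpa using h1.trans (by linarith)
  have hsum : ∑ k ∈ range (n + 1), S ^ k = ((n : ℂ) + 1) • cesaroMean 1 S n := by
    rw [cesaroMean_one, smul_smul, mul_inv_cancel₀ (by exact_mod_cast n.succ_ne_zero), one_smul]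
  have hnorm : ‖((n : ℂ) + 1)‖ = (n : ℝ) + 1 := by exact_mod_cast Complex.norm_natCast (n + 1)
  calc ‖∑ k ∈ range (n + 1), S ^ k‖ = ((n : ℝ) + 1) * ‖cesaroMean 1 S n‖ := by
        rw [hsum, norm_smul, hnorm]
    _ ≤ ((n : ℝ) + 1) * (C * ((n : ℝ) + 1) ^ r) := by
        gcongr
        exact (hS n hn).trans (by gcongr; linarith)
    _ ≤ (C + 1) * ((n + 1 : ℕ) : ℝ) ^ (r + 1) := by
        have h0 : 0 ≤ ((n : ℝ) + 1) ^ r * ((n : ℝ) + 1) := by positivity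
        push_cast
        rw [pow_succ]
        nlinarith

lemma norm_pow_le_of_norm_sum_range_le {T : X →L[ℂ] X} {K : ℝ} {p : ℕ}
    (hT : ∀ m, ‖∑ k ∈ range m, T ^ k‖ ≤ K * (m : ℝ) ^ p) (n : ℕ) :
    ‖T ^ n‖ ≤ 2 * K * ((n : ℝ) + 1) ^ p := by
  simpa [Nat.Ico_succ_singleton] using norm_sum_Ico_le_of_norm_sum_range_le hT n.le_succ

lemma norm_pow_mul_cesaroMean_one_le {T : X →L[ℂ] X} {lam : ℂ} (hlam : ‖lam‖ = 1) {K : ℝ}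
    {p : ℕ} (hT : ∀ m, ‖∑ k ∈ range m, (lam • T) ^ k‖ ≤ K * (m : ℝ) ^ p) (N d : ℕ) :
    ‖T ^ N * cesaroMean 1 (lam • T) d‖ ≤ 2 * K * ((N : ℝ) + (d + 1 : ℕ)) ^ p / (d + 1) := by
  have hblock : lam ^ N • (T ^ N * cesaroMean 1 (lam • T) d) =
      ((d : ℂ) + 1)⁻¹ • ∑ k ∈ Ico N (N + (d + 1)), (lam • T) ^ k := by
    have hshift : lam ^ N • T ^ N * ∑ j ∈ range (d + 1), (lam • T) ^ j =
        ∑ k ∈ Ico N (N + (d + 1)), (lam • T) ^ k := by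
      rw [← smul_pow, mul_sum, sum_Ico_eq_sum_range, Nat.add_sub_cancel_left]
      simp only [pow_add]
    rw [cesaroMean_one, mul_smul_comm, smul_comm, ← smul_mul_assoc, hshift]
  have hnorm : ‖((d : ℂ) + 1)⁻¹‖ = ((d : ℝ) + 1)⁻¹ := by
    rw [norm_inv]; exact_mod_cast congrArg Inv.inv (Complex.norm_natCast (d + 1))
  calc ‖T ^ N * cesaroMean 1 (lam • T) d‖
      = ‖lam ^ N • (T ^ N * cesaroMean 1 (lam • T) d)‖ := by
        rw [norm_smul, norm_pow, hlam, one_pow, one_mul]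
    _ ≤ ((d : ℝ) + 1)⁻¹ * (2 * K * ((N + (d + 1) : ℕ) : ℝ) ^ p) := by
        rw [hblock, norm_smul, hnorm]
        gcongr
        exact norm_sum_Ico_le_of_norm_sum_range_le hT (Nat.le_add_right _ _)
    _ = 2 * K * ((N : ℝ) + (d + 1 : ℕ)) ^ p / (d + 1) := by push_cast; ring

end PartialSums

section NormGrowth

variable {X : Type*} [NormedAddCommGroup X] [NormedSpace ℂ X]

noncomputable def normGrowth (T : X →L[ℂ] X) (p : ℕ) (x : X) : ℝ :=
  limsup (fun n : ℕ => ‖(T ^ n) x‖ / (n.choose p : ℝ)) atTop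

variable {T : X →L[ℂ] X} {K : ℝ} {p : ℕ}

lemma isBoundedUnder_norm_pow_apply_div_choose (hT : ∀ n : ℕ, ‖T ^ n‖ ≤ K * ((n : ℝ) + 1) ^ p)
    (x : X) : IsBoundedUnder (· ≤ ·) atTop (fun n : ℕ => ‖(T ^ n) x‖ / (n.choose p : ℝ)) := by
  have hlim := (tendsto_add_pow_div_choose 1 p).const_mul (K * ‖x‖)
  refine hlim.isBoundedUnder_le.mono_le (.of_forall fun n => ?_)
  calc ‖(T ^ n) x‖ / (n.choose p : ℝ) ≤ K * ((n : ℝ) + 1) ^ p * ‖x‖ / (n.choose p : ℝ) := by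
        gcongr
        exact (T ^ n).le_of_opNorm_le (hT n) x
    _ = K * ‖x‖ * (((n : ℝ) + (1 : ℕ)) ^ p / (n.choose p : ℝ)) := by push_cast; ring

lemma limsup_norm_cesaroMean_succ_mul_sub_one_pow_apply
    (hT : ∀ n : ℕ, ‖T ^ n‖ ≤ K * ((n : ℝ) + 1) ^ (p + 1)) (x : X) :
    limsup (fun n => ‖cesaroMean (p + 1) T n (((T - 1) ^ (p + 1)) x)‖) atTop =
      normGrowth T (p + 1) x := by
  set c : ℕ → ℂ := fun n => ((n + p + 1).choose (p + 1) : ℂ)⁻¹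
  set err : ℕ → ℝ := fun n =>
    ∑ i ∈ range (p + 1), ((n + p + 1).choose i : ℝ) / (n + p + 1).choose (p + 1) *
      ‖((T - 1) ^ i) x‖
  have hc : ∀ n, ‖c n‖ = ((n + p + 1).choose (p + 1) : ℝ)⁻¹ := fun n => by
    simp only [c, norm_inv, Complex.norm_natCast]
  have hmean : ∀ n, cesaroMean (p + 1) T n (((T - 1) ^ (p + 1)) x) =
      c n • (T ^ (n + p + 1)) x -
        c n • ∑ i ∈ range (p + 1), (n + p + 1).choose i • ((T - 1) ^ i) x :=
    fun n => by
      rw [← mul_apply_eq_comp, cesaroMean_succ_mul_sub_one_pow]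
      simp [c, smul_sub]
  have hclose : ∀ n, ‖‖cesaroMean (p + 1) T n (((T - 1) ^ (p + 1)) x)‖ -
      ‖(T ^ (n + p + 1)) x‖ / ((n + p + 1).choose (p + 1) : ℝ)‖ ≤ err n := fun n => by
    rw [Real.norm_eq_abs, hmean, div_eq_inv_mul, ← hc, ← norm_smul]
    refine (abs_norm_sub_norm_le _ _).trans ?_
    rw [sub_sub_cancel_left, norm_neg, norm_smul, hc]
    refine (mul_le_mul_of_nonneg_left (norm_sum_le _ _) (by positivity)).trans ?_
    rw [mul_sum]
    refine sum_le_sum fun i _ => ?_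
    rw [div_eq_inv_mul, mul_assoc]
    gcongr
    exact norm_nsmul_le
  have herr : Tendsto err atTop (𝓝 0) := by
    have h := tendsto_finsetSum (range (p + 1)) fun i hi =>
      (((tendsto_choose_div_choose_of_lt (mem_range.mp hi)).comp
        (tendsto_add_atTop_nat (p + 1))).mul_const ‖((T - 1) ^ i) x‖)
    simp only [zero_mul, sum_const_zero, Function.comp_def, ← add_assoc] at h
    exact h
  rw [normGrowth, ← limsup_nat_add (fun n => ‖(T ^ n) x‖ / (n.choose (p + 1) : ℝ)) (p + 1)]
  simp only [← add_assoc]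
  have hbdd := (tendsto_add_atTop_nat (p + 1)).isBoundedUnder_comp
      (isBoundedUnder_norm_pow_apply_div_choose hT x)
  simp only [Function.comp_def, ← add_assoc] at hbdd
  exact limsup_eq_of_tendsto_sub (fun n => by positivity) hbdd (squeeze_zero_norm hclose herr)

lemma normGrowth_apply_self (hT : ∀ n : ℕ, ‖T ^ n‖ ≤ K * ((n : ℝ) + 1) ^ p) (x : X) :
    normGrowth T p (T x) = normGrowth T p x := by
  have hbdd := (tendsto_add_atTop_nat 1).isBoundedUnder_comp
    (isBoundedUnder_norm_pow_apply_div_choose hT x)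
  have hpos : ∀ᶠ n : ℕ in atTop, ((n + 1).choose p : ℝ) ≠ 0 :=
    eventually_atTop.mpr ⟨p, fun n hn => mod_cast (Nat.choose_pos (by omega)).ne'⟩
  calc normGrowth T p (T x)
      = limsup ((fun n : ℕ => ((n + 1).choose p : ℝ) / n.choose p) *
          fun n : ℕ => ‖(T ^ (n + 1)) x‖ / ((n + 1).choose p : ℝ)) atTop := by
        refine limsup_congr (hpos.mono fun n hn => ?_)
        rw [Pi.mul_apply, ← mul_apply_eq_comp, ← pow_succ, div_mul_div_comm, mul_comm,
          mul_div_mul_right _ _ hn]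
    _ = limsup (fun n : ℕ => ‖(T ^ (n + 1)) x‖ / ((n + 1).choose p : ℝ)) atTop :=
        limsup_mul_eq_of_tendsto_one (fun n => by positivity) hbdd
          (tendsto_succ_choose_div_choose p)
    _ = normGrowth T p x := limsup_nat_add (fun n => ‖(T ^ n) x‖ / (n.choose p : ℝ)) 1

lemma normGrowth_cesaroMean_one_le {lam : ℂ} (hlam : ‖lam‖ = 1)
    (hT : ∀ m, ‖∑ k ∈ range m, (lam • T) ^ k‖ ≤ K * (m : ℝ) ^ p) (d : ℕ) (x : X) :
    normGrowth T p (cesaroMean 1 (lam • T) d x) ≤ 2 * K * p.factorial / (d + 1) * ‖x‖ := by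
  set c := 2 * K / (d + 1) * ‖x‖
  have hlim := (tendsto_add_pow_div_choose (d + 1) p).const_mul c
  have hle : ∀ n : ℕ, ‖(T ^ n) (cesaroMean 1 (lam • T) d x)‖ / (n.choose p : ℝ) ≤
      c * (((n : ℝ) + (d + 1 : ℕ)) ^ p / n.choose p) := fun n => by
    rw [← mul_apply_eq_comp]
    calc ‖(T ^ n * cesaroMean 1 (lam • T) d) x‖ / (n.choose p : ℝ)
        ≤ 2 * K * ((n : ℝ) + (d + 1 : ℕ)) ^ p / (d + 1) * ‖x‖ / n.choose p := by
          gcongr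
          exact (T ^ n * _).le_of_opNorm_le (norm_pow_mul_cesaroMean_one_le hlam hT n d) x
      _ = c * (((n : ℝ) + (d + 1 : ℕ)) ^ p / n.choose p) := by ring
  calc normGrowth T p (cesaroMean 1 (lam • T) d x)
      ≤ limsup (fun n : ℕ => c * (((n : ℝ) + (d + 1 : ℕ)) ^ p / n.choose p)) atTop :=
        limsup_le_limsup (.of_forall hle)
          (isCoboundedUnder_le_of_le atTop fun n => by positivity) hlim.isBoundedUnder_le
    _ = 2 * K * p.factorial / (d + 1) * ‖x‖ := by rw [hlim.limsup_eq]; ring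

lemma tendsto_norm_pow_apply_div_pow_of_normGrowth_eq_zero
    (hT : ∀ n : ℕ, ‖T ^ n‖ ≤ K * ((n : ℝ) + 1) ^ p) {x : X} (hx : normGrowth T p x = 0) :
    Tendsto (fun n : ℕ => ‖(T ^ n) x‖ / (n : ℝ) ^ p) atTop (𝓝 0) := by
  have hchoose : Tendsto (fun n : ℕ => ‖(T ^ n) x‖ / (n.choose p : ℝ)) atTop (𝓝 0) :=
    tendsto_order.2 ⟨fun a ha => .of_forall fun n => ha.trans_le (by positivity),
      fun a ha => eventually_lt_of_limsup_lt (show normGrowth T p x < a from hx ▸ ha)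
        (isBoundedUnder_norm_pow_apply_div_choose hT x)⟩
  refine squeeze_zero' (.of_forall fun n => by positivity)
    (eventually_atTop.mpr ⟨p, fun n hn => ?_⟩) hchoose
  gcongr
  · exact mod_cast Nat.choose_pos hn
  · exact mod_cast Nat.choose_le_pow n p

end NormGrowth

section Isometry

variable {E : Type*} [NormedAddCommGroup E] [NormedSpace ℂ E] [Nontrivial E] {U : E →L[ℂ] E}

lemma norm_pow_eq_one_of_isometry (hU : ∀ y, ‖U y‖ = ‖y‖) (n : ℕ) : ‖U ^ n‖ = 1 := by
  have hpow : ∀ y, ‖(U ^ n) y‖ = ‖y‖ := fun y => by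
    induction n with
    | zero => rfl
    | succ n ih => rw [pow_succ', mul_apply_eq_comp, hU, ih]
  obtain ⟨y, hy⟩ := exists_ne (0 : E)
  refine le_antisymm ((U ^ n).opNorm_le_bound zero_le_one fun y => by rw [hpow, one_mul]) ?_
  have h := (U ^ n).le_opNorm y
  rwa [hpow, le_mul_iff_one_le_left (norm_pos_iff.mpr hy)] at h

lemma spectralRadius_eq_one_of_isometry [CompleteSpace E] (hU : ∀ y, ‖U y‖ = ‖y‖) :
    spectralRadius ℂ U = 1 := by
  have h := spectrum.pow_nnnorm_pow_one_div_tendsto_nhds_spectralRadius U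
  have hn : ∀ n : ℕ, ‖U ^ n‖₊ = 1 := fun n => NNReal.eq (norm_pow_eq_one_of_isometry hU n)
  simp only [hn, ENNReal.coe_one, ENNReal.one_rpow] at h
  exact tendsto_nhds_unique h tendsto_const_nhds

/-- `1 = q(ν)` for the polynomial `q` with `q(U) = M_d(ν⁻¹U)`, so `1 ∈ σ(M_d(ν⁻¹U))` by spectral
mapping. -/
lemma exists_norm_eq_one_forall_one_le_norm_cesaroMean_one [CompleteSpace E]
    (hU : ∀ y, ‖U y‖ = ‖y‖) :
    ∃ lam : ℂ, ‖lam‖ = 1 ∧ ∀ d : ℕ, 1 ≤ ‖cesaroMean 1 (lam • U) d‖ := by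
  obtain ⟨ν, hν, hνr⟩ := spectrum.exists_nnnorm_eq_spectralRadius U
  rw [spectralRadius_eq_one_of_isometry hU] at hνr
  have hν1 : ‖ν‖ = 1 := by
    have h : ‖ν‖₊ = 1 := mod_cast hνr
    rw [← coe_nnnorm, h, NNReal.coe_one]
  have hν0 : ν ≠ 0 := norm_ne_zero_iff.mp (by rw [hν1]; exact one_ne_zero)
  refine ⟨ν⁻¹, by rw [norm_inv, hν1, inv_one], fun d => ?_⟩
  open Polynomial in
  set q : ℂ[X] := ((d : ℂ) + 1)⁻¹ • ∑ j ∈ range (d + 1), (C ν⁻¹ * X) ^ j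
  have hq : aeval U q = cesaroMean 1 (ν⁻¹ • U) d := by
    simp [q, cesaroMean_one, Algebra.smul_def]
  have heval : q.eval ν = 1 := by
    have hd : (d : ℂ) + 1 ≠ 0 := mod_cast d.succ_ne_zero
    simp [q, Polynomial.eval_finsetSum, inv_mul_cancel₀ hν0, hd]
  have hmem := spectrum.subset_polynomial_aeval U q ⟨ν, hν, heval⟩
  rw [hq] at hmem
  simpa using spectrum.norm_le_norm_of_mem hmem

end Isometry

section RangeIsometry

variable {X Y : Type*} [NormedAddCommGroup X] [NormedSpace ℂ X] [NormedAddCommGroup Y]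
  [NormedSpace ℂ Y]

/-- `Q ∘ T` factors through `Q` because `ker Q` is `T`-invariant; the induced map is isometric. -/
lemma exists_isometry_comp_rangeRestrict_eq {Q : X →L[ℂ] Y} {T : X →L[ℂ] X}
    (hQT : ∀ x, ‖Q (T x)‖ = ‖Q x‖) :
    ∃ U : (Q : X →ₗ[ℂ] Y).range →L[ℂ] (Q : X →ₗ[ℂ] Y).range,
      (∀ y, ‖U y‖ = ‖y‖) ∧ U.comp Q.rangeRestrict = Q.rangeRestrict.comp T := by
  set Q' : X →ₗ[ℂ] (Q : X →ₗ[ℂ] Y).range := (Q : X →ₗ[ℂ] Y).rangeRestrict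
  have hsurj : Function.Surjective Q' := LinearMap.surjective_rangeRestrict _
  have hker : LinearMap.ker Q' ≤ LinearMap.ker (Q' ∘ₗ (T : X →ₗ[ℂ] X)) := fun z hz => by
    simp only [LinearMap.mem_ker, LinearMap.comp_apply] at hz ⊢
    rw [← norm_eq_zero] at hz ⊢
    exact (hQT z).trans hz
  set U : (Q : X →ₗ[ℂ] Y).range →ₗ[ℂ] (Q : X →ₗ[ℂ] Y).range :=
    (LinearMap.ker Q').liftQ _ hker ∘ₗ (Q'.quotKerEquivOfSurjective hsurj).symm.toLinearMap
  have hUQ : ∀ x, U (Q' x) = Q' (T x) := fun x => by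
    rw [← LinearMap.quotKerEquivOfSurjective_apply_mk Q' hsurj x]
    simp [U]
  have hU : ∀ y, ‖U y‖ = ‖y‖ := fun y => by
    obtain ⟨x, rfl⟩ := hsurj y
    rw [hUQ]
    exact hQT x
  exact ⟨(⟨U, hU⟩ : _ →ₗᵢ[ℂ] _).toContinuousLinearMap, hU, ContinuousLinearMap.ext hUQ⟩

end RangeIsometry

section ClosedRange

variable {X Y : Type*} [NormedAddCommGroup X] [NormedSpace ℂ X] [CompleteSpace X]
  [NormedAddCommGroup Y] [NormedSpace ℂ Y] [CompleteSpace Y]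

theorem eq_zero_of_norm_apply_eq_of_norm_cesaroMean_one_le {Q : X →L[ℂ] Y} {T : X →L[ℂ] X}
    (hQ : IsClosed (Set.range Q)) (hQT : ∀ x, ‖Q (T x)‖ = ‖Q x‖)
    (hmean : ∀ lam : ℂ, ‖lam‖ = 1 → ∃ c : ℝ, ∀ (d : ℕ) (x : X),
      ‖Q (cesaroMean 1 (lam • T) d x)‖ ≤ c / (d + 1) * ‖x‖) :
    Q = 0 := by
  by_contra hQ0
  obtain ⟨x₀, hx₀⟩ : ∃ x, Q x ≠ 0 := by
    by_contra! h
    exact hQ0 (ContinuousLinearMap.ext h)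
  have : CompleteSpace (Q : X →ₗ[ℂ] Y).range :=
    (show IsClosed ((Q : X →ₗ[ℂ] Y).range : Set Y) from hQ).completeSpace_coe
  have : Nontrivial (Q : X →ₗ[ℂ] Y).range :=
    nontrivial_of_ne (Q.rangeRestrict x₀) 0 fun h => hx₀ (congrArg Subtype.val h)
  obtain ⟨U, hU, hUQ⟩ := exists_isometry_comp_rangeRestrict_eq hQT
  obtain ⟨lam, hlam, hge⟩ := exists_norm_eq_one_forall_one_le_norm_cesaroMean_one hU
  obtain ⟨c, hc⟩ := hmean lam hlam
  obtain ⟨c', hc'₀, hcc'⟩ : ∃ c' : ℝ, 0 ≤ c' ∧ c ≤ c' :=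
    ⟨max c 0, le_max_right _ _, le_max_left _ _⟩
  obtain ⟨b, hb, hpre⟩ := Q.rangeRestrict.exists_preimage_norm_le
    (LinearMap.surjective_rangeRestrict _)
  have hcomm := cesaroMean_comp_of_comp_eq (A := lam • T) (B := lam • U) (J := Q.rangeRestrict)
    (by rw [ContinuousLinearMap.smul_comp, ContinuousLinearMap.comp_smul, hUQ]) 1
  set d := ⌈c' * b⌉₊
  have hsmall : ‖cesaroMean 1 (lam • U) d‖ ≤ c' * b / (d + 1) := by
    refine ContinuousLinearMap.opNorm_le_bound _ (by positivity) fun y => ?_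
    obtain ⟨x, rfl, hx⟩ := hpre y
    calc ‖cesaroMean 1 (lam • U) d (Q.rangeRestrict x)‖
        = ‖Q (cesaroMean 1 (lam • T) d x)‖ := congrArg (‖·‖) (DFunLike.congr_fun (hcomm d) x)
      _ ≤ c' / (d + 1) * (b * ‖Q.rangeRestrict x‖) := by
        refine (hc d x).trans ?_
        gcongr
      _ = c' * b / (d + 1) * ‖Q.rangeRestrict x‖ := by ring
  have hlt : c' * b / (d + 1) < 1 := by
    rw [div_lt_one (by positivity)]
    linarith [Nat.le_ceil (c' * b)]
  linarith [hge d]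

end ClosedRange

/-- Suppose sup_{n≥1,|λ|=1} n^{−r} ‖M_n(λT)‖ < ∞ for a nonnegative integer r, and
let γ(x) = limsup_n ‖M_n^{(r+1)}(T)(T−I)^{r+1} x‖. If there is a complex Banach
space Y and Q ∈ B(X,Y) with closed range and ‖Q x‖ = γ(x) for all x, then
‖T^n x‖ = o(n^{r+1}) for every x ∈ X. -/
theorem stmt18 {X : Type*} [NormedAddCommGroup X] [NormedSpace ℂ X] [CompleteSpace X]
    (T : X →L[ℂ] X)
    (r : ℕ)
    (hbdd : ∃ C : ℝ, ∀ n : ℕ, 1 ≤ n → ∀ lam : ℂ, ‖lam‖ = 1 →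
      ‖cesaroMean 1 (lam • T) n‖ ≤ C * (n : ℝ) ^ r)
    {Y : Type*} [NormedAddCommGroup Y] [NormedSpace ℂ Y] [CompleteSpace Y]
    (Q : X →L[ℂ] Y)
    (hQrange : IsClosed (Set.range ⇑Q))
    (hQnorm : ∀ x : X,
      ‖Q x‖ = limsup (fun n => ‖cesaroMean (r + 1) T n (((T - 1) ^ (r + 1)) x)‖) atTop) :
    ∀ x : X, Tendsto (fun n : ℕ => ‖(T ^ n) x‖ / (n : ℝ) ^ (r + 1)) atTop (𝓝 0) := by
  obtain ⟨C, hC⟩ := hbdd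
  have hsum : ∀ lam : ℂ, ‖lam‖ = 1 → ∀ m : ℕ,
      ‖∑ k ∈ range m, (lam • T) ^ k‖ ≤ (C + 1) * (m : ℝ) ^ (r + 1) := fun lam hlam =>
    norm_sum_range_pow_le_of_norm_cesaroMean_one_le fun n hn => hC n hn lam hlam
  have hpow : ∀ n : ℕ, ‖T ^ n‖ ≤ 2 * (C + 1) * ((n : ℝ) + 1) ^ (r + 1) :=
    norm_pow_le_of_norm_sum_range_le (by simpa using hsum 1 norm_one)
  have hγ : ∀ x, ‖Q x‖ = normGrowth T (r + 1) x := fun x =>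
    (hQnorm x).trans (limsup_norm_cesaroMean_succ_mul_sub_one_pow_apply hpow x)
  have hQ0 : Q = 0 := by
    refine eq_zero_of_norm_apply_eq_of_norm_cesaroMean_one_le hQrange
      (fun x => by rw [hγ, hγ, normGrowth_apply_self hpow]) fun lam hlam =>
        ⟨2 * (C + 1) * (r + 1).factorial, fun d x => by
          rw [hγ]
          exact normGrowth_cesaroMean_one_le hlam (hsum lam hlam) d x⟩
  intro x
  exact tendsto_norm_pow_apply_div_pow_of_normGrowth_eq_zero hpow (by rw [← hγ, hQ0]; simp)
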